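/- Let S ~ Bern(a), S₁ ~ Bern(p₁) independent with a, p₁ ≤ 1/2, X = S ⊕ S₁, b = P(X=1) ≤ 1/2. For p_a ∈ [0,1] define g(p_a) = H(S|X̂) where the channel from X to X̂ (binary) has P(X̂=0|X=0) = p_a and P(X̂=0|X=1) = (1−b)(1−p_a)/b. Then g attains its maximum value H(a) at p_a = 1−b, is decreasing on [1−b, 1], and g(1) = H(p₁). Consequently, for every C with H(p₁) ≤ C ≤ H(a), there exists p_a ∈ [1−b, 1] with g(p_a) = C, and the resulting X̂ satisfies P(X̂=0) = P(X=0) (zero total variation between marginals). -/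

import Mathlib

/-!
Write `u` and `v` for the conditional probabilities `P(S=1 | X̂=0)` and `P(S=1 | X̂=1)`. A direct
computation gives `H(S | X̂) = (1-b) H(u) + b H(v)` with `u = p₁ + b e` and `v = 1 - p₁ - (1-b) e`,
where `e = (1 - pa)(1 - 2p₁)/b`; the mean `(1-b) u + b v = a` does not depend on `pa`.
As `pa` runs from `1-b` to `1`, `e` falls from `1 - 2p₁` to `0`, so the pair `(u, v)` spreads
from `(a, a)` to `(p₁, 1 - p₁)` around the fixed mean, and concavity of `H` makes the weighted
average decrease from `H(a)` to `H(p₁)`. The intermediate value theorem does the rest.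
-/

open Finset

/-- Binary entropy function (base 2). -/
noncomputable def binEnt (p : ℝ) : ℝ :=
  -(p * Real.logb 2 p) - (1 - p) * Real.logb 2 (1 - p)

/-- Bernoulli pmf with parameter `p`. -/
noncomputable def bern (p : ℝ) : Bool → ℝ := fun b => if b then p else 1 - p

/-- Conditional (Shannon) entropy `H(B | A)` (base 2) of a joint pmf `p : B → A → ℝ`. -/
noncomputable def condEnt2 {β α : Type*} [Fintype β] [Fintype α] (p : β → α → ℝ) : ℝ :=
  ∑ a : α, ∑ b : β, -(p b a * Real.logb 2 (p b a / ∑ b' : β, p b' a))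

theorem binEnt_eq_binEntropy_div (p : ℝ) : binEnt p = Real.binEntropy p / Real.log 2 := by
  unfold binEnt Real.binEntropy Real.logb
  rw [Real.log_inv, Real.log_inv]
  ring

@[fun_prop]
theorem continuous_binEnt : Continuous binEnt := by
  simpa only [funext binEnt_eq_binEntropy_div] using Real.binEntropy_continuous.div_const _

theorem binEnt_one_sub (p : ℝ) : binEnt (1 - p) = binEnt p := by
  simp only [binEnt_eq_binEntropy_div, Real.binEntropy_one_sub]

theorem concaveOn_binEnt : ConcaveOn ℝ (Set.Icc 0 1) binEnt := by
  have h : binEnt = fun p => (Real.log 2)⁻¹ • Real.binEntropy p :=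
    funext fun p => by rw [binEnt_eq_binEntropy_div, smul_eq_mul, inv_mul_eq_div]
  rw [h]
  exact Real.strictConcave_binEntropy.concaveOn.smul (inv_nonneg.mpr (Real.log_pos one_lt_two).le)

theorem ConcaveOn.sub_mul_add_sub_mul_le {s : Set ℝ} {f : ℝ → ℝ} (hf : ConcaveOn ℝ s f)
    {x y z : ℝ} (hx : x ∈ s) (hy : y ∈ s) (hz : z ∈ Set.Icc x y) :
    (y - z) * f x + (z - x) * f y ≤ (y - x) * f z := by
  rcases hz.1.eq_or_lt with rfl | hxz
  · simp
  have hxy : 0 < y - x := by linarith [hz.2]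
  have hsum : (y - z) / (y - x) + (z - x) / (y - x) = 1 := by field_simp; ring
  have h := hf.2 hx hy (div_nonneg (by linarith [hz.2]) hxy.le) (div_nonneg (by linarith) hxy.le)
    hsum
  have hpt : (y - z) / (y - x) * x + (z - x) / (y - x) * y = z := by field_simp; ring
  simp only [smul_eq_mul, hpt] at h
  rw [div_mul_eq_mul_div, div_mul_eq_mul_div, ← add_div, div_le_iff₀ hxy] at h
  linarith

theorem ConcaveOn.mul_add_mul_le_of_mean_eq {s : Set ℝ} {f : ℝ → ℝ} (hf : ConcaveOn ℝ s f)
    {w x y x' y' : ℝ} (hw0 : 0 ≤ w) (hw1 : w ≤ 1) (hx' : x' ∈ s) (hy' : y' ∈ s)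
    (hx : x ∈ Set.Icc x' y') (hy : y ∈ Set.Icc x' y')
    (hmean : (1 - w) * x + w * y = (1 - w) * x' + w * y') :
    (1 - w) * f x' + w * f y' ≤ (1 - w) * f x + w * f y := by
  have hcx := hf.sub_mul_add_sub_mul_le hx' hy' hx
  have hcy := hf.sub_mul_add_sub_mul_le hx' hy' hy
  rcases (hx.1.trans hx.2).eq_or_lt with rfl | hlt
  · obtain rfl : x = x' := le_antisymm hx.2 hx.1
    obtain rfl : y = x := le_antisymm hy.2 hy.1
    rfl
  refine le_of_mul_le_mul_left ?_ (sub_pos.mpr hlt)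
  linarith [mul_le_mul_of_nonneg_left hcx (sub_nonneg.mpr hw1),
    mul_le_mul_of_nonneg_left hcy hw0, congrArg (· * (f y' - f x')) hmean]

noncomputable def mixedBinEnt (b p₁ e : ℝ) : ℝ :=
  (1 - b) * binEnt (p₁ + b * e) + b * binEnt (1 - p₁ - (1 - b) * e)

@[fun_prop]
theorem continuous_mixedBinEnt (b p₁ : ℝ) : Continuous (mixedBinEnt b p₁) := by
  unfold mixedBinEnt
  fun_prop

theorem mixedBinEnt_zero (b p₁ : ℝ) : mixedBinEnt b p₁ 0 = binEnt p₁ := by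
  simp only [mixedBinEnt, mul_zero, add_zero, sub_zero, binEnt_one_sub]
  ring

theorem mixedBinEnt_one_sub_two_mul (b p₁ : ℝ) :
    mixedBinEnt b p₁ (1 - 2 * p₁) = binEnt (p₁ + b * (1 - 2 * p₁)) := by
  rw [mixedBinEnt, show 1 - p₁ - (1 - b) * (1 - 2 * p₁) = p₁ + b * (1 - 2 * p₁) by ring]
  ring

theorem monotoneOn_mixedBinEnt {b p₁ : ℝ} (hb0 : 0 ≤ b) (hb1 : b ≤ 1) (hp₁ : 0 ≤ p₁) :
    MonotoneOn (mixedBinEnt b p₁) (Set.Icc 0 (1 - 2 * p₁)) := by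
  intro e he e' he' hee'
  have hbe : b * e ≤ b * e' := mul_le_mul_of_nonneg_left hee' hb0
  have hbe' : (1 - b) * e ≤ (1 - b) * e' := mul_le_mul_of_nonneg_left hee' (by linarith)
  have hbe0 : 0 ≤ b * e := mul_nonneg hb0 he.1
  have hbe1 : 0 ≤ (1 - b) * e := mul_nonneg (by linarith) he.1
  have hbe'1 : b * e' + (1 - b) * e' ≤ 1 - 2 * p₁ := by linarith [he'.2]
  exact concaveOn_binEnt.mul_add_mul_le_of_mean_eq hb0 hb1
    ⟨by linarith, by linarith [he.2]⟩ ⟨by linarith [he.2], by linarith⟩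
    ⟨by linarith, by linarith⟩ ⟨by linarith, by linarith⟩ (by ring)

theorem condEnt2_of_eq_mul {α : Type*} [Fintype α] (p : Bool → α → ℝ) (m t : α → ℝ)
    (htrue : ∀ a, p true a = m a * t a) (hfalse : ∀ a, p false a = m a * (1 - t a)) :
    condEnt2 p = ∑ a, m a * binEnt (t a) := by
  refine Finset.sum_congr rfl fun a _ => ?_
  rw [Fintype.sum_bool, Fintype.sum_bool, htrue, hfalse, ← mul_add, add_sub_cancel]
  rcases eq_or_ne (m a) 0 with hm | hm
  · simp [hm]
  rw [mul_one, mul_div_cancel_left₀ _ hm, mul_div_cancel_left₀ _ hm, binEnt]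
  ring

noncomputable def channel (b pa : ℝ) (x xh : Bool) : ℝ :=
  if xh then (if x then 1 - (1 - b) * (1 - pa) / b else 1 - pa)
  else (if x then (1 - b) * (1 - pa) / b else pa)

theorem sum_bern_mul_channel_false {b : ℝ} (hb : b ≠ 0) (p₁ pa : ℝ) :
    ∑ s : Bool, ∑ x : Bool, bern b x * bern p₁ (Bool.xor s x) * channel b pa x false = 1 - b := by
  simp only [Fintype.sum_bool, bern, channel, Bool.xor_true, Bool.xor_false, Bool.not_true,
    Bool.not_false, if_true, if_false, Bool.false_eq_true]
  field_simp
  ring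

theorem condEnt2_bern_mul_channel {b : ℝ} (hb : b ≠ 0) (p₁ pa : ℝ) :
    condEnt2 (fun s xh => ∑ x : Bool, bern b x * bern p₁ (Bool.xor s x) * channel b pa x xh) =
      mixedBinEnt b p₁ ((1 - pa) * (1 - 2 * p₁) / b) := by
  rw [condEnt2_of_eq_mul _ (fun xh => if xh then b else 1 - b)
    (fun xh => if xh then 1 - p₁ - (1 - b) * ((1 - pa) * (1 - 2 * p₁) / b)
      else p₁ + b * ((1 - pa) * (1 - 2 * p₁) / b))]
  · simp only [Fintype.sum_bool, if_true, if_false, Bool.false_eq_true, mixedBinEnt]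
    ring
  all_goals
    intro xh
    cases xh <;>
    · simp only [Fintype.sum_bool, bern, channel, Bool.xor_true, Bool.xor_false, Bool.not_true,
        Bool.not_false, if_true, if_false, Bool.false_eq_true]
      field_simp
      ring

theorem stmt15_general (a p₁ b : ℝ)
    (hp0 : 0 ≤ p₁) (hp : p₁ < 1 / 2)
    (hb : b = (a - p₁) / (1 - 2 * p₁)) (hb0 : 0 < b) (hb2 : b ≤ 1 / 2) :
    -- channel from X to X̂
    let W : ℝ → Bool → Bool → ℝ := fun pa x xh =>
      if xh then (if x then 1 - (1 - b) * (1 - pa) / b else 1 - pa)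
      else (if x then (1 - b) * (1 - pa) / b else pa)
    -- joint pmf of (S, X, X̂); the joint of (S, X) is `bern b x * bern p₁ (s ⊕ x)`
    let joint : ℝ → Bool → Bool → Bool → ℝ := fun pa s x xh =>
      bern b x * bern p₁ (Bool.xor s x) * W pa x xh
    let g : ℝ → ℝ := fun pa =>
      condEnt2 (fun s xh => ∑ x : Bool, joint pa s x xh)
    g (1 - b) = binEnt a ∧
    AntitoneOn g (Set.Icc (1 - b) 1) ∧
    g 1 = binEnt p₁ ∧
    (∀ C : ℝ, binEnt p₁ ≤ C → C ≤ binEnt a →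
      ∃ pa ∈ Set.Icc (1 - b) 1, g pa = C) ∧
    (∀ pa : ℝ, (∑ s : Bool, ∑ x : Bool, joint pa s x false) = 1 - b) := by
  intro W joint g
  have h2p : 0 < 1 - 2 * p₁ := by linarith
  have hab : a = p₁ + b * (1 - 2 * p₁) := by
    rw [hb, div_mul_cancel₀ _ h2p.ne']
    ring
  have hg : ∀ pa, g pa = mixedBinEnt b p₁ ((1 - pa) * (1 - 2 * p₁) / b) :=
    condEnt2_bern_mul_channel hb0.ne' p₁
  have hg_left : g (1 - b) = binEnt a := by
    rw [hg, sub_sub_cancel, mul_div_cancel_left₀ _ hb0.ne', mixedBinEnt_one_sub_two_mul, hab]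
  have hg_right : g 1 = binEnt p₁ := by
    simp only [hg, sub_self, zero_mul, zero_div, mixedBinEnt_zero]
  have hg_anti : AntitoneOn g (Set.Icc (1 - b) 1) := by
    intro x hx y hy hxy
    have hmaps : ∀ pa ∈ Set.Icc (1 - b) 1, (1 - pa) * (1 - 2 * p₁) / b ∈ Set.Icc 0 (1 - 2 * p₁) :=
      fun pa hmem => ⟨div_nonneg (mul_nonneg (sub_nonneg.mpr hmem.2) h2p.le) hb0.le, by
        rw [div_le_iff₀ hb0]; nlinarith [hmem.1]⟩
    rw [hg, hg]
    exact monotoneOn_mixedBinEnt hb0.le (by linarith) hp0 (hmaps y hy) (hmaps x hx)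
      (by gcongr)
  refine ⟨hg_left, hg_anti, hg_right, fun C hC₁ hC₂ => ?_,
    fun pa => sum_bern_mul_channel_false hb0.ne' p₁ pa⟩
  have hcont : ContinuousOn g (Set.Icc (1 - b) 1) := by
    rw [funext hg]
    fun_prop
  exact intermediate_value_Icc' (by linarith) hcont ⟨hg_right ▸ hC₁, hg_left ▸ hC₂⟩

/-- with the binary symmetric source (`S ~ Bern(a)`, `S₁ ~ Bern(p₁)`,
`X ~ Bern(b)`, `S = X ⊕ S₁`, `b = P(X=1) = (a-p₁)/(1-2p₁) ≤ 1/2`), consider the channel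
`P(X̂=0|X=0) = pa`, `P(X̂=0|X=1) = (1-b)(1-pa)/b` and let `g pa = H(S|X̂)`.  Then
`g (1-b) = H(a)`, `g` is decreasing on `[1-b, 1]`, `g 1 = H(p₁)`; consequently for every
`C ∈ [H(p₁), H(a)]` there is `pa ∈ [1-b, 1]` with `g pa = C`, and the marginal of `X̂`
always matches that of `X` (`P(X̂=0) = P(X=0) = 1-b`, zero total variation). -/
theorem stmt15 (a p₁ b : ℝ)
    (ha0 : 0 ≤ a) (ha : a ≤ 1 / 2) (hp0 : 0 ≤ p₁) (hp : p₁ < 1 / 2) (hpa : p₁ ≤ a)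
    (hb : b = (a - p₁) / (1 - 2 * p₁)) (hb0 : 0 < b) (hb2 : b ≤ 1 / 2) :
    -- channel from X to X̂
    let W : ℝ → Bool → Bool → ℝ := fun pa x xh =>
      if xh then (if x then 1 - (1 - b) * (1 - pa) / b else 1 - pa)
      else (if x then (1 - b) * (1 - pa) / b else pa)
    -- joint pmf of (S, X, X̂); the joint of (S, X) is `bern b x * bern p₁ (s ⊕ x)`
    let joint : ℝ → Bool → Bool → Bool → ℝ := fun pa s x xh =>
      bern b x * bern p₁ (Bool.xor s x) * W pa x xh
    let g : ℝ → ℝ := fun pa =>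
      condEnt2 (fun s xh => ∑ x : Bool, joint pa s x xh)
    g (1 - b) = binEnt a ∧
    AntitoneOn g (Set.Icc (1 - b) 1) ∧
    g 1 = binEnt p₁ ∧
    (∀ C : ℝ, binEnt p₁ ≤ C → C ≤ binEnt a →
      ∃ pa ∈ Set.Icc (1 - b) 1, g pa = C) ∧
    (∀ pa : ℝ, (∑ s : Bool, ∑ x : Bool, joint pa s x false) = 1 - b) :=
  stmt15_general a p₁ b hp0 hp hb hb0 hb2
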